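/- Let C ⊆ ℝ^n be a salient polyhedral convex cone, r a vector spanning an extremal ray of C, and φ : ℝ^n → ℝ^{n−1} a surjective linear map with kernel span(r). Then the image cone φ(C) is a salient polyhedral cone, provided that −r ∉ C and r is the only direction of C in ker φ (i.e., ker φ ∩ C = ℝ_{≥0}·r). -/
import Mathlib

open Finset

/-- The convex cone generated by a set: all finite nonnegative linear combinations. -/
def coneGen {V : Type*} [AddCommGroup V] [Module ℝ V] (S : Set V) : Set V :=
  {x | ∃ (n : ℕ) (c : Fin n → ℝ) (v : Fin n → V),
    (∀ i, 0 ≤ c i) ∧ (∀ i, v i ∈ S) ∧ x = ∑ i, c i • v i}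

/-- A cone is salient if it contains no line. -/
def IsSalient {V : Type*} [AddCommGroup V] [Module ℝ V] (C : Set V) : Prop :=
  ∀ x ∈ C, -x ∈ C → x = 0

/-- A nonzero vector spans an extremal ray of the cone `C`. -/
def IsExtremalVec {V : Type*} [AddCommGroup V] [Module ℝ V] (C : Set V) (v : V) : Prop :=
  v ≠ 0 ∧ v ∈ C ∧ ∀ x y, x ∈ C → y ∈ C → v = x + y →
    (∃ a : ℝ, 0 ≤ a ∧ x = a • v) ∧ (∃ b : ℝ, 0 ≤ b ∧ y = b • v)

lemma coneGen_add {V : Type*} [AddCommGroup V] [Module ℝ V] {S : Set V} {x y : V}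
    (hx : x ∈ coneGen S) (hy : y ∈ coneGen S) : x + y ∈ coneGen S := by
  obtain ⟨n, c, v, hc, hv, rfl⟩ := hx
  obtain ⟨m, d, w, hd, hw, rfl⟩ := hy
  refine ⟨n + m, Fin.append c d, Fin.append v w, ?_, ?_, ?_⟩
  · intro i
    refine Fin.addCases (fun j => ?_) (fun j => ?_) i
    · simpa [Fin.append_left] using hc j
    · simpa [Fin.append_right] using hd j
  · intro i
    refine Fin.addCases (fun j => ?_) (fun j => ?_) i
    · simpa [Fin.append_left] using hv j
    · simpa [Fin.append_right] using hw j
  · rw [Fin.sum_univ_add]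
    simp [Fin.append_left, Fin.append_right]

lemma coneGen_smul {V : Type*} [AddCommGroup V] [Module ℝ V] {S : Set V} {x : V} {t : ℝ}
    (ht : 0 ≤ t) (hx : x ∈ coneGen S) : t • x ∈ coneGen S := by
  obtain ⟨n, c, v, hc, hv, rfl⟩ := hx
  exact ⟨n, fun i => t * c i, v, fun i => mul_nonneg ht (hc i), hv, by
    simp [Finset.smul_sum, mul_smul]⟩

lemma coneGen_image {V W : Type*} [AddCommGroup V] [Module ℝ V] [AddCommGroup W] [Module ℝ W]
    (φ : V →ₗ[ℝ] W) (S : Set V) : φ '' coneGen S = coneGen (φ '' S) := by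
  ext y
  constructor
  · rintro ⟨x, ⟨m, c, v, hc, hv, rfl⟩, rfl⟩
    exact ⟨m, c, fun i => φ (v i), hc, fun i => ⟨v i, hv i, rfl⟩, by simp [map_sum]⟩
  · rintro ⟨m, c, w, hc, hw, rfl⟩
    choose v hvS hvw using hw
    exact ⟨∑ i, c i • v i, ⟨m, c, v, hc, hvS, rfl⟩, by simp [map_sum, hvw]⟩

theorem image_cone_salient_polyhedral {n : ℕ}
    (C : Set (Fin (n + 1) → ℝ)) (S : Set (Fin (n + 1) → ℝ)) (hS : S.Finite)
    (hC : C = coneGen S) (hsal : IsSalient C)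
    (r : Fin (n + 1) → ℝ) (hr : IsExtremalVec C r)
    (φ : (Fin (n + 1) → ℝ) →ₗ[ℝ] (Fin n → ℝ))
    (hsurj : Function.Surjective φ)
    (hker : LinearMap.ker φ = Submodule.span ℝ {r})
    (hnr : -r ∉ C)
    (hkerC : ∀ x ∈ C, φ x = 0 → ∃ c : ℝ, 0 ≤ c ∧ x = c • r) :
    IsSalient (φ '' C) ∧ ∃ T : Set (Fin n → ℝ), T.Finite ∧ φ '' C = coneGen T := by
  have hφr : φ r = 0 := by
    have : r ∈ LinearMap.ker φ := by
      rw [hker]; exact Submodule.mem_span_singleton_self r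
    exact this
  constructor
  · rintro y ⟨x, hx, rfl⟩ ⟨x', hx', hx'y⟩
    have hsum : x + x' ∈ C := by
      rw [hC] at hx hx' ⊢; exact coneGen_add hx hx'
    have hφsum : φ (x + x') = 0 := by
      rw [map_add, hx'y]; ring
    obtain ⟨c, hc0, hcr⟩ := hkerC _ hsum hφsum
    rcases eq_or_lt_of_le hc0 with hc | hc
    · -- c = 0, so x' = -x
      have : x + x' = 0 := by rw [hcr, ← hc, zero_smul]
      have hx0 : x = 0 := hsal x hx (by
        have h : x' = -x := eq_neg_of_add_eq_zero_right this
        exact h ▸ hx')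
      rw [hx0, map_zero]
    · -- c > 0
      have hr' : r = c⁻¹ • x + c⁻¹ • x' := by
        rw [← smul_add, hcr, smul_smul, inv_mul_cancel₀ (ne_of_gt hc), one_smul]
      have hxm : c⁻¹ • x ∈ C := by
        rw [hC] at hx ⊢; exact coneGen_smul (by positivity) hx
      have hx'm : c⁻¹ • x' ∈ C := by
        rw [hC] at hx' ⊢; exact coneGen_smul (by positivity) hx'
      obtain ⟨⟨a, ha0, hax⟩, _⟩ := hr.2.2 _ _ hxm hx'm hr'
      have : x = (c * a) • r := by
        have := congrArg (fun z => c • z) hax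
        simpa [smul_smul, mul_inv_cancel₀ (ne_of_gt hc), mul_comm] using this
      rw [this, map_smul, hφr, smul_zero]
  · exact ⟨φ '' S, hS.image φ, by rw [hC, coneGen_image]⟩
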